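/- Let N, s be positive integers, let l ≤ s, let ω̃₁,…,ω̃ₛ be real weights, let E be real, let β ≤ 0, let c > 0 and Δ > 0, let φ and φ̄ be arbitrary real numbers, and let ν be a real number with e^{ν+c−βω̃ᵢ} < 1 for all i = 1,…,s. Define ζ_l(ν,β) = ∏_{i=1}^l (1−e^{ν−βω̃ᵢ})^{−1} and ζ_{s−l}(ν,β) = ∏_{i=l+1}^s (1−e^{ν−βω̃ᵢ})^{−1}. Then the number of tuples (N₁,…,Nₛ) of nonnegative integers satisfying ∑_{i=1}^s Nᵢ = N, ∑_{i=1}^s Nᵢω̃ᵢ ≥ E, |∑_{i=1}^l Nᵢ − φ| ≥ Δ, and |∑_{i=l+1}^s Nᵢ − φ̄| ≥ Δ is at most e^{βE−νN}·e^{−cΔ}·(ζ_l(ν+c,β)e^{−cφ} + ζ_l(ν−c,β)e^{cφ})·(ζ_{s−l}(ν+c,β)e^{−cφ̄} + ζ_{s−l}(ν−c,β)e^{cφ̄}). -/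

import Mathlib

open Finset Real

lemma geom_le_aux (r : ℝ) (h0 : 0 ≤ r) (h1 : r < 1) (m : ℕ) :
    ∑ n ∈ Finset.range m, r ^ n ≤ (1 - r)⁻¹ := by
  have hm : 0 ≤ r ^ m := pow_nonneg h0 m
  rw [geom_sum_eq (by linarith : r ≠ 1)]
  rw [div_le_iff_of_neg (by linarith : r - 1 < 0)]
  have h2 : (1 - r)⁻¹ * (r - 1) = -1 := by
    rw [inv_mul_eq_div, div_eq_iff (by linarith : (1:ℝ) - r ≠ 0)]
    ring
  rw [h2]; linarith

lemma exp_abs_le_aux (y : ℝ) : Real.exp |y| ≤ Real.exp y + Real.exp (-y) := by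
  rcases abs_cases y with ⟨h, _⟩ | ⟨h, _⟩ <;> rw [h] <;>
    nlinarith [Real.exp_pos y, Real.exp_pos (-y)]

/-- let `N, s` be positive integers, `l ≤ s`, `ω̃₁,…,ω̃ₛ` real weights, `E`
real, `β ≤ 0`, `c > 0`, `Δ > 0`, `φ` and `φ̄` arbitrary reals, and `ν` real with
`e^{ν+c−βω̃ᵢ} < 1` for all `i`.  With `ζ_l(ν,β) = ∏_{i=1}^l (1−e^{ν−βω̃ᵢ})⁻¹` and
`ζ_{s−l}(ν,β) = ∏_{i=l+1}^s (1−e^{ν−βω̃ᵢ})⁻¹`, the number of tuples `(N₁,…,Nₛ)` of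
nonnegative integers with `∑ᵢ Nᵢ = N`, `∑ᵢ Nᵢω̃ᵢ ≥ E`, `|∑_{i=1}^l Nᵢ − φ| ≥ Δ`, and
`|∑_{i=l+1}^s Nᵢ − φ̄| ≥ Δ` is at most
`e^{βE−νN}·e^{−cΔ}·(ζ_l(ν+c,β)e^{−cφ} + ζ_l(ν−c,β)e^{cφ})·(ζ_{s−l}(ν+c,β)e^{−cφ̄} + ζ_{s−l}(ν−c,β)e^{cφ̄})`. -/
theorem counting_estimate (N s l : ℕ) (hN : 0 < N) (hs : 0 < s) (hls : l ≤ s)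
    (ω : Fin s → ℝ) (E β c Δ φ φbar ν : ℝ) (hβ : β ≤ 0) (hc : 0 < c) (hΔ : 0 < Δ)
    (hν : ∀ i, Real.exp (ν + c - β * ω i) < 1) :
    (Nat.card
        {f : Fin s → ℕ //
          ∑ i, f i = N ∧
          E ≤ ∑ i, (f i : ℝ) * ω i ∧
          Δ ≤ |(∑ i ∈ Finset.univ.filter (fun i : Fin s => (i : ℕ) < l), (f i : ℝ)) - φ| ∧
          Δ ≤ |(∑ i ∈ Finset.univ.filter (fun i : Fin s => l ≤ (i : ℕ)), (f i : ℝ)) - φbar|} : ℝ)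
      ≤ Real.exp (β * E - ν * N) * Real.exp (-c * Δ) *
          ((∏ i ∈ Finset.univ.filter (fun i : Fin s => (i : ℕ) < l),
              (1 - Real.exp (ν + c - β * ω i))⁻¹) * Real.exp (-c * φ) +
           (∏ i ∈ Finset.univ.filter (fun i : Fin s => (i : ℕ) < l),
              (1 - Real.exp (ν - c - β * ω i))⁻¹) * Real.exp (c * φ)) *
          ((∏ i ∈ Finset.univ.filter (fun i : Fin s => l ≤ (i : ℕ)),
              (1 - Real.exp (ν + c - β * ω i))⁻¹) * Real.exp (-c * φbar) +
           (∏ i ∈ Finset.univ.filter (fun i : Fin s => l ≤ (i : ℕ)),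
              (1 - Real.exp (ν - c - β * ω i))⁻¹) * Real.exp (c * φbar)) := by
  classical
  set L : Finset (Fin s) := Finset.univ.filter (fun i : Fin s => (i : ℕ) < l) with hL
  set R : Finset (Fin s) := Finset.univ.filter (fun i : Fin s => l ≤ (i : ℕ)) with hR
  have hRL : R = Finset.univ.filter (fun i : Fin s => ¬ (i : ℕ) < l) := by
    simp [hR, not_lt]
  set p : (Fin s → ℕ) → Prop := fun f =>
    ∑ i, f i = N ∧
    E ≤ ∑ i, (f i : ℝ) * ω i ∧
    Δ ≤ |(∑ i ∈ L, (f i : ℝ)) - φ| ∧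
    Δ ≤ |(∑ i ∈ R, (f i : ℝ)) - φbar| with hp
  set T : Finset (Fin s → ℕ) := Fintype.piFinset (fun _ => Finset.range (N + 1)) with hT
  set F : Finset (Fin s → ℕ) := T.filter p with hF
  -- cardinality identification
  have hsub : ∀ f, p f → f ∈ T := by
    intro f hf
    simp only [hT, Fintype.mem_piFinset, Finset.mem_range, Nat.lt_succ_iff]
    intro i
    calc f i ≤ ∑ j, f j := Finset.single_le_sum (fun _ _ => Nat.zero_le _) (Finset.mem_univ i)
      _ = N := hf.1
  have hcard : (Nat.card {f : Fin s → ℕ // p f} : ℝ) = (F.card : ℝ) := by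
    have hset : {f : Fin s → ℕ | p f} = ↑F := by
      ext f
      simp only [Set.mem_setOf_eq, hF, Finset.coe_filter, Set.mem_setOf_eq]
      exact ⟨fun h => ⟨hsub f h, h⟩, fun h => h.2⟩
    calc (Nat.card {f : Fin s → ℕ // p f} : ℝ)
        = (Nat.card ({f : Fin s → ℕ | p f} : Set (Fin s → ℕ)) : ℝ) := rfl
      _ = (F.card : ℝ) := by rw [Nat.card_coe_set_eq, hset, Set.ncard_coe_finset]
  rw [show (Nat.card
        {f : Fin s → ℕ //
          ∑ i, f i = N ∧
          E ≤ ∑ i, (f i : ℝ) * ω i ∧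
          Δ ≤ |(∑ i ∈ L, (f i : ℝ)) - φ| ∧
          Δ ≤ |(∑ i ∈ R, (f i : ℝ)) - φbar|} : ℝ) =
      (Nat.card {f : Fin s → ℕ // p f} : ℝ) from rfl, hcard]
  -- sign terms
  set term : ℝ → ℝ → (Fin s → ℕ) → ℝ := fun σ τ f =>
    Real.exp (σ * ((∑ i ∈ L, (f i : ℝ)) - φ)) *
    Real.exp (τ * ((∑ i ∈ R, (f i : ℝ)) - φbar)) *
    Real.exp (β * (E - ∑ i, (f i : ℝ) * ω i)) *
    Real.exp (ν * ((∑ i ∈ L, (f i : ℝ)) + (∑ i ∈ R, (f i : ℝ)) - N)) with hterm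
  have hterm_pos : ∀ σ τ f, 0 < term σ τ f := by
    intro σ τ f
    simp only [hterm]
    positivity
  -- pointwise bound on F
  have hpoint : ∀ f ∈ F, (1 : ℝ) ≤ Real.exp (-c * Δ) *
      (term c c f + term c (-c) f + term (-c) c f + term (-c) (-c) f) := by
    intro f hfF
    obtain ⟨h1, h2, h3, h4⟩ := (Finset.mem_filter.mp hfF).2
    set a : ℝ := (∑ i ∈ L, (f i : ℝ)) - φ with ha
    set b : ℝ := (∑ i ∈ R, (f i : ℝ)) - φbar with hb
    have hX : (1:ℝ) ≤ Real.exp (β * (E - ∑ i, (f i : ℝ) * ω i)) := by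
      rw [← Real.exp_zero]
      apply Real.exp_le_exp.mpr
      have h5 : E - ∑ i, (f i : ℝ) * ω i ≤ 0 := by linarith
      nlinarith [mul_nonneg (neg_nonneg.2 hβ) (neg_nonneg.2 h5)]
    have hY : Real.exp (ν * ((∑ i ∈ L, (f i : ℝ)) + (∑ i ∈ R, (f i : ℝ)) - N)) = 1 := by
      have hsplit : (∑ i ∈ L, (f i : ℝ)) + (∑ i ∈ R, (f i : ℝ)) = (N : ℝ) := by
        rw [hRL, hL, Finset.sum_filter_add_sum_filter_not, ← Nat.cast_sum, h1]
      rw [hsplit]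
      simp
    have hA : Real.exp (c * Δ) ≤ Real.exp (c * a) + Real.exp (-(c * a)) := by
      calc Real.exp (c * Δ) ≤ Real.exp |c * a| := by
            apply Real.exp_le_exp.mpr
            rw [abs_mul, abs_of_pos hc]
            exact mul_le_mul_of_nonneg_left h3 hc.le
        _ ≤ _ := exp_abs_le_aux _
    have hB : (1:ℝ) ≤ Real.exp (c * b) + Real.exp (-(c * b)) := by
      calc (1:ℝ) = Real.exp 0 := by simp
        _ ≤ Real.exp |c * b| := Real.exp_le_exp.mpr (abs_nonneg _)
        _ ≤ _ := exp_abs_le_aux _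
    have hexpand : term c c f + term c (-c) f + term (-c) c f + term (-c) (-c) f =
        (Real.exp (c * a) + Real.exp (-(c * a))) * (Real.exp (c * b) + Real.exp (-(c * b))) *
        Real.exp (β * (E - ∑ i, (f i : ℝ) * ω i)) *
        Real.exp (ν * ((∑ i ∈ L, (f i : ℝ)) + (∑ i ∈ R, (f i : ℝ)) - N)) := by
      simp only [hterm, ← ha, ← hb, neg_mul]
      ring
    rw [hexpand, hY, mul_one]
    have hstep : Real.exp (c * Δ) ≤
        (Real.exp (c * a) + Real.exp (-(c * a))) * (Real.exp (c * b) + Real.exp (-(c * b))) *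
        Real.exp (β * (E - ∑ i, (f i : ℝ) * ω i)) := by
      calc Real.exp (c * Δ) = Real.exp (c * Δ) * 1 * 1 := by ring
        _ ≤ _ := by
            gcongr
    rw [neg_mul, Real.exp_neg, one_le_inv_mul₀ (Real.exp_pos _)]
    exact hstep
  -- sum-product interchange bound
  have sum_prod : ∀ g : Fin s → ℝ, (∀ i, 0 ≤ g i) → (∀ i, g i < 1) →
      ∑ f ∈ T, ∏ i, g i ^ f i ≤ ∏ i, (1 - g i)⁻¹ := by
    intro g h0 h1
    rw [hT, ← Finset.prod_univ_sum]
    apply Finset.prod_le_prod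
    · intro i _
      exact Finset.sum_nonneg fun n _ => pow_nonneg (h0 i) n
    · intro i _
      exact geom_le_aux _ (h0 i) (h1 i) _
  -- rewriting term as a product
  have hterm_eq : ∀ (σ τ : ℝ) (f : Fin s → ℕ), term σ τ f =
      Real.exp (β * E - ν * N - σ * φ - τ * φbar) *
      ∏ i : Fin s, (Real.exp (ν + (if (i : ℕ) < l then σ else τ) - β * ω i)) ^ (f i) := by
    intro σ τ f
    have hprod : ∏ i : Fin s, (Real.exp (ν + (if (i : ℕ) < l then σ else τ) - β * ω i)) ^ (f i)
        = Real.exp (∑ i : Fin s, (f i : ℝ) * (ν + (if (i : ℕ) < l then σ else τ) - β * ω i)) := by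
      rw [Real.exp_sum]
      apply Finset.prod_congr rfl
      intro i _
      exact (Real.exp_nat_mul _ (f i)).symm
    have hWsplit : ∑ i, (f i : ℝ) * ω i =
        (∑ i ∈ L, (f i : ℝ) * ω i) + ∑ i ∈ R, (f i : ℝ) * ω i := by
      rw [hRL, hL, Finset.sum_filter_add_sum_filter_not]
    have esum : ∑ i : Fin s, (f i : ℝ) * (ν + (if (i : ℕ) < l then σ else τ) - β * ω i)
        = (∑ i ∈ L, (f i : ℝ) * (ν + (if (i : ℕ) < l then σ else τ) - β * ω i))
          + ∑ i ∈ R, (f i : ℝ) * (ν + (if (i : ℕ) < l then σ else τ) - β * ω i) := by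
      rw [hRL, hL, Finset.sum_filter_add_sum_filter_not]
    have e1 : ∑ i ∈ L, (f i : ℝ) * (ν + (if (i : ℕ) < l then σ else τ) - β * ω i)
        = (ν + σ) * (∑ i ∈ L, (f i : ℝ)) - β * (∑ i ∈ L, (f i : ℝ) * ω i) := by
      rw [Finset.mul_sum, Finset.mul_sum, ← Finset.sum_sub_distrib]
      apply Finset.sum_congr rfl
      intro i hi
      rw [hL, Finset.mem_filter] at hi
      rw [if_pos hi.2]
      ring
    have e2 : ∑ i ∈ R, (f i : ℝ) * (ν + (if (i : ℕ) < l then σ else τ) - β * ω i)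
        = (ν + τ) * (∑ i ∈ R, (f i : ℝ)) - β * (∑ i ∈ R, (f i : ℝ) * ω i) := by
      rw [Finset.mul_sum, Finset.mul_sum, ← Finset.sum_sub_distrib]
      apply Finset.sum_congr rfl
      intro i hi
      rw [hR, Finset.mem_filter] at hi
      rw [if_neg (not_lt.mpr hi.2)]
      ring
    rw [hprod, esum, e1, e2]
    simp only [hterm]
    rw [← Real.exp_add, ← Real.exp_add, ← Real.exp_add, ← Real.exp_add]
    congr 1
    rw [hWsplit]
    ring
  -- per-sign-term summed bound
  have hbound : ∀ (σ τ : ℝ), (∀ i, Real.exp (ν + σ - β * ω i) < 1) →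
      (∀ i, Real.exp (ν + τ - β * ω i) < 1) →
      ∑ f ∈ F, term σ τ f ≤ Real.exp (β * E - ν * N - σ * φ - τ * φbar) *
        ((∏ i ∈ L, (1 - Real.exp (ν + σ - β * ω i))⁻¹) *
         ∏ i ∈ R, (1 - Real.exp (ν + τ - β * ω i))⁻¹) := by
    intro σ τ hσ hτ
    calc ∑ f ∈ F, term σ τ f ≤ ∑ f ∈ T, term σ τ f :=
          Finset.sum_le_sum_of_subset_of_nonneg (by rw [hF]; exact Finset.filter_subset _ _)
            (fun f _ _ => (hterm_pos σ τ f).le)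
      _ = Real.exp (β * E - ν * N - σ * φ - τ * φbar) *
          ∑ f ∈ T, ∏ i : Fin s, (Real.exp (ν + (if (i : ℕ) < l then σ else τ) - β * ω i)) ^ (f i) := by
          rw [Finset.mul_sum]
          exact Finset.sum_congr rfl fun f _ => hterm_eq σ τ f
      _ ≤ _ := by
          apply mul_le_mul_of_nonneg_left _ (Real.exp_pos _).le
          refine (sum_prod _ (fun i => (Real.exp_pos _).le) (fun i => ?_)).trans_eq ?_
          · split
            · exact hσ i
            · exact hτ i
          · rw [← Finset.prod_filter_mul_prod_filter_not Finset.univ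
              (fun i : Fin s => (i : ℕ) < l) (fun i => (1 - Real.exp (ν + (if (i : ℕ) < l then σ else τ) - β * ω i))⁻¹)]
            rw [← hL, ← hRL]
            congr 1
            · apply Finset.prod_congr rfl
              intro i hi
              rw [hL, Finset.mem_filter] at hi
              rw [if_pos hi.2]
            · apply Finset.prod_congr rfl
              intro i hi
              rw [hRL, Finset.mem_filter] at hi
              rw [if_neg hi.2]
  have hm : ∀ i, Real.exp (ν + -c - β * ω i) < 1 := by
    intro i
    exact lt_trans (Real.exp_lt_exp.mpr (by linarith)) (hν i)
  have hν' : ∀ i, Real.exp (ν + c - β * ω i) < 1 := hν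
  -- assemble
  calc (F.card : ℝ) = ∑ _f ∈ F, (1 : ℝ) := by simp
    _ ≤ ∑ f ∈ F, Real.exp (-c * Δ) *
        (term c c f + term c (-c) f + term (-c) c f + term (-c) (-c) f) :=
        Finset.sum_le_sum hpoint
    _ = Real.exp (-c * Δ) * ((∑ f ∈ F, term c c f) + (∑ f ∈ F, term c (-c) f)
        + (∑ f ∈ F, term (-c) c f) + (∑ f ∈ F, term (-c) (-c) f)) := by
        rw [← Finset.sum_add_distrib, ← Finset.sum_add_distrib, ← Finset.sum_add_distrib,
          Finset.mul_sum]
    _ ≤ Real.exp (-c * Δ) *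
        (Real.exp (β * E - ν * N - c * φ - c * φbar) *
          ((∏ i ∈ L, (1 - Real.exp (ν + c - β * ω i))⁻¹) *
           ∏ i ∈ R, (1 - Real.exp (ν + c - β * ω i))⁻¹)
        + Real.exp (β * E - ν * N - c * φ - (-c) * φbar) *
          ((∏ i ∈ L, (1 - Real.exp (ν + c - β * ω i))⁻¹) *
           ∏ i ∈ R, (1 - Real.exp (ν + -c - β * ω i))⁻¹)
        + Real.exp (β * E - ν * N - (-c) * φ - c * φbar) *
          ((∏ i ∈ L, (1 - Real.exp (ν + -c - β * ω i))⁻¹) *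
           ∏ i ∈ R, (1 - Real.exp (ν + c - β * ω i))⁻¹)
        + Real.exp (β * E - ν * N - (-c) * φ - (-c) * φbar) *
          ((∏ i ∈ L, (1 - Real.exp (ν + -c - β * ω i))⁻¹) *
           ∏ i ∈ R, (1 - Real.exp (ν + -c - β * ω i))⁻¹)) := by
        apply mul_le_mul_of_nonneg_left _ (Real.exp_pos _).le
        gcongr
        · exact hbound c c hν' hν'
        · exact hbound c (-c) hν' hm
        · exact hbound (-c) c hm hν'
        · exact hbound (-c) (-c) hm hm
    _ = _ := by
        have hxp : ∀ u v : ℝ, Real.exp (β * E - ν * N - u * φ - v * φbar) =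
            Real.exp (β * E - ν * N) * Real.exp (-u * φ) * Real.exp (-v * φbar) := by
          intro u v
          rw [← Real.exp_add, ← Real.exp_add]
          congr 1
          ring
        simp only [hxp, show (ν + -c : ℝ) = ν - c from by ring,
          show (-(-c) : ℝ) = c from by ring]
        ring
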